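/- arXiv:1003.5025 — 3 statements merged into one kernel-verified Lean document; each statement's English description precedes it below -/
import Mathlib

section
/- Let T' be a theory in a first-order language L' and let M be a model of T' that is κ-saturated for some κ > |L'| + ℵ₀. Let (a⃗_i)_{i∈ω} be an indiscernible sequence of p-tuples from M, and let φ(x⃗,y⃗) be an L'-formula (x⃗ of length p, y⃗ of length q) such that M ⊨ ∃y⃗ φ(a⃗_i, y⃗) for some i ∈ ω. Then there is an indiscernible sequence (b⃗_i)_{i∈ω} of q-tuples from M such that M ⊨ φ(a⃗_i, b⃗_i) for every i ∈ ω. -/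
open FirstOrder FirstOrder.Language FirstOrder.Language.Structure Cardinal Set

namespace PaperDep

/-- The language with a single unary relation symbol `U`. -/
def unaryRelLang : FirstOrder.Language.{0, 0} :=
  ⟨fun _ => Empty, fun n => match n with | 1 => PUnit | _ => Empty⟩

/-- Interpreting the unary relation symbol `U` as membership in `B`. -/
def unaryRelStructure (M : Type*) (B : Set M) : unaryRelLang.Structure M where
  funMap := fun {_} f _ => Empty.elim f
  RelMap := fun {n} r x =>
    match n, r with
    | 1, _ => x 0 ∈ B
    | 0, r => Empty.elim r
    | (_ + 2), r => Empty.elim r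

/-- The language with a single unary function symbol `𝔣`. -/
def unaryFunLang : FirstOrder.Language.{0, 0} :=
  ⟨fun n => match n with | 1 => PUnit | _ => Empty, fun _ => Empty⟩

/-- Interpreting the unary function symbol `𝔣` as the function `F`. -/
def unaryFunStructure (M : Type*) (F : M → M) : unaryFunLang.Structure M where
  funMap := fun {n} f x =>
    match n, f with
    | 1, _ => F (x 0)
    | 0, f => Empty.elim f
    | (_ + 2), f => Empty.elim f
  RelMap := fun {_} r _ => Empty.elim r

/-- The language `L(U)`. -/
def LU (L : FirstOrder.Language.{0, 0}) : FirstOrder.Language.{0, 0} := L.sum unaryRelLang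

/-- The `L(U)`-structure on `M` given by an `L`-structure together with the
interpretation `B` of the predicate `U`. -/
def LUStructure (L : FirstOrder.Language.{0, 0}) (M : Type*) [L.Structure M] (B : Set M) :
    (LU L).Structure M :=
  letI := unaryRelStructure M B
  Language.sumStructure L unaryRelLang M

/-- The language `L(𝔣)`. -/
def LF (L : FirstOrder.Language.{0, 0}) : FirstOrder.Language.{0, 0} := L.sum unaryFunLang

/-- The `L(𝔣)`-structure on `M` given by an `L`-structure together with the
interpretation `F` of the function symbol `𝔣`. -/
def LFStructure (L : FirstOrder.Language.{0, 0}) (M : Type*) [L.Structure M] (F : M → M) :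
    (LF L).Structure M :=
  letI := unaryFunStructure M F
  Language.sumStructure L unaryFunLang M

/-- `(a⃗ᵢ)_{i ∈ ω}` is an indiscernible sequence of `p`-tuples from `M`. -/
def IsIndiscernible (L : FirstOrder.Language) {M : Type*} [L.Structure M] {p : ℕ}
    (a : ℕ → Fin p → M) : Prop :=
  ∀ (k : ℕ) (φ : L.Formula (Fin k × Fin p)) (i j : Fin k → ℕ),
    StrictMono i → StrictMono j →
      (φ.Realize (fun v => a (i v.1) v.2) ↔ φ.Realize (fun v => a (j v.1) v.2))

/-- `(a⃗ᵢ)_{i ∈ ω}` is an indiscernible sequence of `p`-tuples over the tuple `b⃗`. -/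
def IsIndiscernibleOver (L : FirstOrder.Language) {M : Type*} [L.Structure M] {p q : ℕ}
    (a : ℕ → Fin p → M) (b : Fin q → M) : Prop :=
  ∀ (k : ℕ) (φ : L.Formula ((Fin k × Fin p) ⊕ Fin q)) (i j : Fin k → ℕ),
    StrictMono i → StrictMono j →
      (φ.Realize (Sum.elim (fun v => a (i v.1) v.2) b) ↔
        φ.Realize (Sum.elim (fun v => a (j v.1) v.2) b))

/-- A theory is dependent (NIP) if in every model, every formula `φ(x⃗,y⃗)`, every
indiscernible sequence `(a⃗ᵢ)` and parameter tuple `b⃗` yield a finite or cofinite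
set `{i : φ(a⃗ᵢ, b⃗)}`. -/
def Dependent {L : FirstOrder.Language.{0, 0}} (T : L.Theory) : Prop :=
  ∀ (M : Type) [L.Structure M], T.Model M →
    ∀ (p q : ℕ) (φ : L.Formula (Fin p ⊕ Fin q)) (a : ℕ → Fin p → M) (b : Fin q → M),
      IsIndiscernible L a →
        ({i : ℕ | φ.Realize (Sum.elim (a i) b)}.Finite ∨
          {i : ℕ | ¬ φ.Realize (Sum.elim (a i) b)}.Finite)

/-- `M` is `κ`-saturated: every finitely satisfiable set of formulas with parameters from
a subset of `M` of size `< κ` and with fewer than `κ` free variables is realized in `M`. -/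
def IsSaturated (L : FirstOrder.Language.{0, 0}) (M : Type) [L.Structure M]
    (κ : Cardinal.{0}) : Prop :=
  ∀ (α : Type), #α < κ → ∀ A : Set M, #A < κ →
    ∀ S : Set (L.Formula (α ⊕ A)),
      (∀ s : Finset (L.Formula (α ⊕ A)), ↑s ⊆ S →
        ∃ v : α → M, ∀ φ ∈ s, φ.Realize (Sum.elim v (Subtype.val : A → M))) →
      ∃ v : α → M, ∀ φ ∈ S, φ.Realize (Sum.elim v (Subtype.val : A → M))

/-- The definable closure of `X` in `M` (with respect to the language `L`):
the set of elements that are the unique realization of some `L`-formula with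
parameters from `X`. -/
def dclIn (L : FirstOrder.Language) (M : Type*) [L.Structure M] (X : Set M) : Set M :=
  {a | ∃ φ : L.Formula (X ⊕ Fin 1),
    φ.Realize (Sum.elim (Subtype.val : X → M) fun _ => a) ∧
      ∀ b : M, φ.Realize (Sum.elim (Subtype.val : X → M) fun _ => b) → b = a}

end PaperDep
namespace PaperDep

/-- A set is "interval-like" if it is an open interval, possibly with infinite endpoints. -/
def IsIntervalLike {M : Type*} [LinearOrder M] (u : Set M) : Prop :=
  (∃ a b : M, u = Set.Ioo a b) ∨ (∃ a : M, u = Set.Iio a) ∨ (∃ a : M, u = Set.Ioi a) ∨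
    u = Set.univ

/-- `s` is a finite union of points and open intervals. -/
def FinUnionPtsIntervals {M : Type*} [LinearOrder M] (s : Set M) : Prop :=
  ∃ (n : ℕ) (f : Fin n → Set M),
    (∀ i, (∃ a : M, f i = {a}) ∨ IsIntervalLike (f i)) ∧ s = ⋃ i, f i

/-- `s` is a finite union of open intervals. -/
def FinUnionIntervals {M : Type*} [LinearOrder M] (s : Set M) : Prop :=
  ∃ (n : ℕ) (f : Fin n → Set M), (∀ i, IsIntervalLike (f i)) ∧ s = ⋃ i, f i

/-- `s` is open in the order topology. -/
def OrderOpen {M : Type*} [LinearOrder M] (s : Set M) : Prop :=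
  ∀ x ∈ s, ∃ u : Set M, IsIntervalLike u ∧ x ∈ u ∧ u ⊆ s

/-- The distinguished order symbol of `L` is interpreted as the order of `M`. -/
def OrdCompat (L : FirstOrder.Language) [L.IsOrdered] (M : Type*) [L.Structure M] [LE M] :
    Prop :=
  ∀ x y : M, Structure.RelMap (leSymb : L.Relations 2) ![x, y] ↔ x ≤ y

/-- The linearly ordered `L`-structure `M` is o-minimal: every subset of `M` definable with
parameters is a finite union of points and open intervals. -/
def OMinimalStructure (L : FirstOrder.Language) (M : Type*) [L.Structure M] [LinearOrder M] :
    Prop :=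
  ∀ s : Set M, (Set.univ : Set M).Definable₁ L s → FinUnionPtsIntervals s

/-- The theory `T` (in an ordered language) is o-minimal: every model (with its linear order,
compatible with the order symbol of `L`) is o-minimal. -/
def OMinimalTheory (L : FirstOrder.Language.{0, 0}) [L.IsOrdered] (T : L.Theory) : Prop :=
  ∀ (M : Type) [L.Structure M] [LinearOrder M], OrdCompat L M → T.Model M →
    OMinimalStructure L M

/-- The theory `T` has quantifier elimination. -/
def HasQE {L : FirstOrder.Language} (T : L.Theory) : Prop :=
  ∀ (n : ℕ) (φ : L.Formula (Fin n)),
    ∃ ψ : L.Formula (Fin n), ψ.IsQF ∧ (φ ⇔[T] ψ)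

/-- The theory `T` has a universal axiomatization. -/
def HasUnivAx {L : FirstOrder.Language.{0, 0}} (T : L.Theory) : Prop :=
  ∃ T₀ : L.Theory, T₀.IsUniversal ∧ ∀ (M : Type) [L.Structure M], T.Model M ↔ T₀.Model M

/-- `L`-terms naming the operations of an (ordered) abelian group with a distinguished
element `1`. -/
structure AbGroupOps (L : FirstOrder.Language) where
  add : L.Term (Fin 2)
  neg : L.Term (Fin 1)
  zero : L.Term (Fin 0)
  one : L.Term (Fin 0)

/-- The terms of `ops` are interpreted in `M` as the group operations, and `1` is positive. -/
def AbGroupOps.Compat {L : FirstOrder.Language} (ops : AbGroupOps L) (M : Type*)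
    [L.Structure M] [AddCommGroup M] [LinearOrder M] [IsOrderedAddMonoid M] : Prop :=
  (∀ x y : M, ops.add.realize ![x, y] = x + y) ∧
    (∀ x : M, ops.neg.realize ![x] = -x) ∧
    ops.zero.realize (fun i : Fin 0 => i.elim0 : Fin 0 → M) = 0 ∧
    0 < ops.one.realize (fun i : Fin 0 => i.elim0 : Fin 0 → M)

/-- `L`-terms naming the operations of an ordered ring. -/
structure RingOps (L : FirstOrder.Language) where
  add : L.Term (Fin 2)
  mul : L.Term (Fin 2)
  neg : L.Term (Fin 1)
  zero : L.Term (Fin 0)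
  one : L.Term (Fin 0)

/-- The terms of `ops` are interpreted in `M` as the ring operations. -/
def RingOps.Compat {L : FirstOrder.Language} (ops : RingOps L) (M : Type*)
    [L.Structure M] [Field M] [LinearOrder M] [IsStrictOrderedRing M] : Prop :=
  (∀ x y : M, ops.add.realize ![x, y] = x + y) ∧
    (∀ x y : M, ops.mul.realize ![x, y] = x * y) ∧
    (∀ x : M, ops.neg.realize ![x] = -x) ∧
    ops.zero.realize (fun i : Fin 0 => i.elim0 : Fin 0 → M) = 0 ∧
    ops.one.realize (fun i : Fin 0 => i.elim0 : Fin 0 → M) = 1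

/-- An ordered field is real closed: nonnegative elements are squares and odd-degree
polynomials have roots. -/
def RealClosed (M : Type*) [Field M] [LinearOrder M] [IsStrictOrderedRing M] : Prop :=
  (∀ x : M, 0 ≤ x → ∃ y : M, y ^ 2 = x) ∧
    ∀ p : Polynomial M, Odd p.natDegree → ∃ x : M, p.eval x = 0

/-- `T` extends the theory of real closed ordered fields: in every model, the distinguished
symbols define the structure of a real closed ordered field. -/
def ExtendsRCF (L : FirstOrder.Language.{0, 0}) [L.IsOrdered] (ops : RingOps L)
    (T : L.Theory) : Prop :=
  ∀ (M : Type) [L.Structure M], T.Model M → Nonempty M →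
    ∃ (fld : Field M) (ord : LinearOrder M),
      letI := fld
      letI := ord
      ∃ _ : IsStrictOrderedRing M,
      OrdCompat L M ∧ ops.Compat M ∧ RealClosed M

/-- `T` extends the theory of ordered abelian groups with a distinguished positive
element `1`. -/
def ExtendsOAG (L : FirstOrder.Language.{0, 0}) [L.IsOrdered] (ops : AbGroupOps L)
    (T : L.Theory) : Prop :=
  ∀ (M : Type) [L.Structure M], T.Model M → Nonempty M →
    ∃ (grp : AddCommGroup M) (ord : LinearOrder M),
      letI := grp
      letI := ord
      ∃ _ : IsOrderedAddMonoid M,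
      OrdCompat L M ∧ ops.Compat M

/-- `V` is a `T`-convex subring of the elementary substructure of `D` with underlying set `S`:
a convex subring closed under all continuous `L`-∅-definable unary functions. -/
def IsTConvexSubring (L : FirstOrder.Language) {D : Type*} [L.Structure D]
    [Field D] [LinearOrder D] [IsStrictOrderedRing D] (S V : Set D) : Prop :=
  V ⊆ S ∧ (0 : D) ∈ V ∧ (1 : D) ∈ V ∧
    (∀ x ∈ V, ∀ y ∈ V, x + y ∈ V) ∧ (∀ x ∈ V, ∀ y ∈ V, x * y ∈ V) ∧ (∀ x ∈ V, -x ∈ V) ∧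
    (∀ x ∈ V, ∀ z ∈ V, ∀ y ∈ S, x ≤ y → y ≤ z → y ∈ V) ∧
    ∀ F : D → D,
      (∃ φ : L.Formula (Fin 2), ∀ x y : D, F x = y ↔ φ.Realize ![x, y]) →
      (∀ x ∈ S, F x ∈ S) →
      (∀ x ∈ S, ∀ ε ∈ S, 0 < ε → ∃ δ ∈ S, 0 < δ ∧ ∀ y ∈ S, |y - x| < δ → |F y - F x| < ε) →
      ∀ x ∈ V, F x ∈ V

/-- The maximal ideal (set of nonunits) of the convex subring `V`. -/
def maxIdealIn {D : Type*} [Field D] [LinearOrder D] [IsStrictOrderedRing D] (V : Set D) : Set D :=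
  {x ∈ V | x = 0 ∨ x⁻¹ ∉ V}

open Classical in
/-- Rational powers in an ordered field: `qpow c q` is the unique positive `y` with
`y ^ q.den = c ^ q.num`, when it exists (and `0` otherwise). -/
noncomputable def qpow {A : Type*} [Field A] [LinearOrder A] [IsStrictOrderedRing A] (c : A) (q : ℚ) : A :=
  if h : ∃ y : A, 0 < y ∧ y ^ (q.den : ℕ) = c ^ (q.num : ℤ) then h.choose else 0

/-- Boolean combinations of sets from the collection `G`. -/
inductive BoolComb {α : Type*} (G : Set (Set α)) : Set α → Prop
  | basic {s : Set α} : s ∈ G → BoolComb G s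
  | compl {s : Set α} : BoolComb G s → BoolComb G sᶜ
  | union {s t : Set α} : BoolComb G s → BoolComb G t → BoolComb G (s ∪ t)

end PaperDep
namespace PaperDep

/-- The language of ordered rings `{<, +, -, ·, 0, 1}`: constants `0, 1` (`Fin 2`),
a unary function `-`, binary functions `+, ·` (`Fin 2`), and a binary relation `<`. -/
def oRingLang : FirstOrder.Language.{0, 0} :=
  ⟨fun n => match n with | 0 => Fin 2 | 1 => PUnit | 2 => Fin 2 | _ => Empty,
    fun n => match n with | 2 => PUnit | _ => Empty⟩

/-- The standard interpretation of the language of ordered rings in `ℝ`. -/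
def oRingStructureR : oRingLang.Structure ℝ where
  funMap := fun {n} f x =>
    match n, f with
    | 0, f => ![(0 : ℝ), 1] f
    | 1, _ => -(x 0)
    | 2, f => ![x 0 + x 1, x 0 * x 1] f
    | (_ + 3), f => Empty.elim f
  RelMap := fun {n} r x =>
    match n, r with
    | 2, _ => x 0 < x 1
    | 0, r => Empty.elim r
    | 1, r => Empty.elim r
    | (_ + 3), r => Empty.elim r

/-- `F : M → M` is definable (with parameters) in the `L`-structure `M`. -/
def DefinableFun (L : FirstOrder.Language) (M : Type*) [L.Structure M] (F : M → M) : Prop :=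
  (Set.univ : Set M).Definable L {x : Fin 2 → M | F (x 0) = x 1}

/-- The `L`-structure `ℝ` is polynomially bounded. -/
def PolyBounded (L : FirstOrder.Language) [L.Structure ℝ] : Prop :=
  ∀ F : ℝ → ℝ, DefinableFun L ℝ F → ∃ (n : ℕ) (x₀ : ℝ), ∀ x : ℝ, x₀ ≤ x → |F x| ≤ x ^ n

/-- The `L`-structure `ℝ` has field of exponents `ℚ`. -/
def FieldOfExpQ (L : FirstOrder.Language) [L.Structure ℝ] : Prop :=
  ∀ F : ℝ → ℝ, DefinableFun L ℝ F →
    (∀ x y : ℝ, 0 < x → 0 < y → F (x * y) = F x * F y) →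
    ∃ q : ℚ, ∀ x : ℝ, 0 < x → F x = x ^ (q : ℝ)

open Classical in
/-- `lam x` is the unique `g ∈ 2^ℤ` with `g ≤ x < 2g` for `x > 0`, and `0` for `x ≤ 0`. -/
noncomputable def lam : ℝ → ℝ := fun x =>
  if h : ∃ k : ℤ, (2 : ℝ) ^ k ≤ x ∧ x < 2 * (2 : ℝ) ^ k then (2 : ℝ) ^ h.choose else 0

/-- The pure closure `H_G⟨g₁, …, g_m⟩` of the subgroup `H` together with `g₁, …, g_m`
inside the (multiplicatively written, torsion-free abelian) group `G`. -/
def pureClosure {A : Type*} [Field A] [LinearOrder A] [IsStrictOrderedRing A] (G H : Set A) {m : ℕ}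
    (g : Fin m → A) : Set A :=
  {x ∈ G | ∃ M₀ : ℕ, 0 < M₀ ∧ ∃ h ∈ H, ∃ k : Fin m → ℤ,
    x ^ M₀ = h * ∏ i, g i ^ k i}

end PaperDep

namespace PaperDep

/-!
Choose a witness `c n` for every `a n`: indiscernibility of `a` moves the given witness along
the sequence. The sequence `b` is then a realization of the countable type in the variables
`(b n)ₙ` over `{a n}` which says that `φ (a n, b n)` holds for all `n` and that the sequence of
pairs `(a n, b n)` is indiscernible. This type is finitely satisfiable: by Ramsey's theorem,
the finitely many formulas involved are homogeneous on a subsequence `(a (h n), c (h n))`, and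
the indiscernibility of `a` transfers the resulting finite configuration from `a ∘ h` to an
initial segment of `a`. Saturation then realizes the type.
-/

def IsHomogeneous {k : ℕ} (P : (Fin k → ℕ) → Prop) (H : Set ℕ) : Prop :=
  ∀ i j : Fin k → ℕ, StrictMono i → StrictMono j → range i ⊆ H → range j ⊆ H → (P i ↔ P j)

theorem IsHomogeneous.mono {k : ℕ} {P : (Fin k → ℕ) → Prop} {H H' : Set ℕ}
    (hH : IsHomogeneous P H) (h : H' ⊆ H) : IsHomogeneous P H' :=
  fun i j hi hj hiH hjH => hH i j hi hj (hiH.trans h) (hjH.trans h)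

theorem exists_endHomogeneous {k : ℕ}
    (ih : ∀ (P : (Fin k → ℕ) → Prop) (S : Set ℕ), S.Infinite →
      ∃ H ⊆ S, H.Infinite ∧ IsHomogeneous P H)
    (P : (Fin (k + 1) → ℕ) → Prop) {S : Set ℕ} (hS : S.Infinite) :
    ∃ d : ℕ → ℕ, StrictMono d ∧ range d ⊆ S ∧
      ∀ n, IsHomogeneous (fun t => P (Fin.cons (d n) t)) (d '' Ioi n) := by
  choose H hHS hHinf hHhom using ih
  let pick (s : {s : Set ℕ // s.Infinite}) : ℕ := s.2.nonempty.some
  let next (s : {s : Set ℕ // s.Infinite}) : {s : Set ℕ // s.Infinite} :=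
    ⟨H (fun t => P (Fin.cons (pick s) t)) (s.1 \ Iic (pick s)) (s.2.sdiff (finite_Iic _)),
      hHinf _ _ _⟩
  let seq (n : ℕ) : {s : Set ℕ // s.Infinite} := next^[n] ⟨S, hS⟩
  have seq_succ (n : ℕ) : seq (n + 1) = next (seq n) := Function.iterate_succ_apply' _ _ _
  have pick_mem (n : ℕ) : pick (seq n) ∈ (seq n).1 := (seq n).2.nonempty.some_mem
  have seq_succ_sub (n : ℕ) : (seq (n + 1)).1 ⊆ (seq n).1 \ Iic (pick (seq n)) := by
    rw [seq_succ]; exact hHS _ _ _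
  have seq_anti : Antitone fun n => (seq n).1 :=
    antitone_nat_of_succ_le fun n => (seq_succ_sub n).trans sdiff_subset
  have pick_mem_succ {n m : ℕ} (h : n < m) : pick (seq m) ∈ (seq (n + 1)).1 :=
    seq_anti h (pick_mem m)
  refine ⟨fun n => pick (seq n), strictMono_nat_of_lt_succ fun n => ?_, ?_, fun n => ?_⟩
  · simpa using (seq_succ_sub n (pick_mem (n + 1))).2
  · rintro _ ⟨n, rfl⟩
    exact seq_anti (Nat.zero_le n) (pick_mem n)
  · have hom : IsHomogeneous (fun t => P (Fin.cons (pick (seq n)) t)) (seq (n + 1)).1 := by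
      rw [seq_succ]; exact hHhom _ _ _
    refine hom.mono ?_
    rintro _ ⟨m, hm, rfl⟩
    exact pick_mem_succ hm

theorem exists_infinite_subset_isHomogeneous (k : ℕ) (P : (Fin k → ℕ) → Prop) {S : Set ℕ}
    (hS : S.Infinite) :
    ∃ H ⊆ S, H.Infinite ∧ IsHomogeneous P H := by
  induction k generalizing S with
  | zero => exact ⟨S, subset_rfl, hS, fun i j _ _ _ _ => by rw [Subsingleton.elim i j]⟩
  | succ k ih =>
    obtain ⟨d, hd, hdS, hend⟩ := exists_endHomogeneous (fun P _ hS => ih P hS) P hS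
    let colour (n : ℕ) : Prop := P (Fin.cons (d n) fun l => d (n + 1 + l))
    obtain ⟨b, hb⟩ := Finite.exists_infinite_fiber colour
    have key (i : Fin (k + 1) → ℕ) (hi : StrictMono i) (hiH : range i ⊆ d '' (colour ⁻¹' {b})) :
        P i ↔ b := by
      obtain ⟨n, hn, hn0⟩ := hiH ⟨0, rfl⟩
      have htail : range (Fin.tail i) ⊆ d '' Ioi n := by
        rintro _ ⟨l, rfl⟩
        obtain ⟨m, -, hm⟩ := hiH ⟨l.succ, rfl⟩
        refine ⟨m, hd.lt_iff_lt.1 ?_, hm⟩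
        rw [hm, hn0]
        exact hi (Fin.succ_pos l)
      have hseg : range (fun l : Fin k => d (n + 1 + l)) ⊆ d '' Ioi n := by
        rintro _ ⟨l, rfl⟩
        exact ⟨_, by simp only [mem_Ioi]; omega, rfl⟩
      rw [← Fin.cons_self_tail i, ← hn0]
      exact (hend n _ _ (fun l l' h => hi (Fin.succ_lt_succ_iff.2 h))
        (fun l l' h => hd (by simpa using h)) htail hseg).trans (Iff.of_eq hn)
    exact ⟨d '' (colour ⁻¹' {b}), (image_subset_range _ _).trans hdS,
      (infinite_coe_iff.1 hb).image hd.injective.injOn,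
      fun i j hi hj hiH hjH => (key i hi hiH).trans (key j hj hjH).symm⟩

theorem exists_strictMono_homogeneous {k : ℕ} (P : (Fin k → ℕ) → Prop) :
    ∃ h : ℕ → ℕ, StrictMono h ∧ ∀ i j : Fin k → ℕ, StrictMono i → StrictMono j →
      (P (h ∘ i) ↔ P (h ∘ j)) := by
  obtain ⟨H, -, hH, hom⟩ := exists_infinite_subset_isHomogeneous k P infinite_univ
  have hmem (n : ℕ) : Nat.nth (· ∈ H) n ∈ H := Nat.nth_mem_of_infinite hH n
  exact ⟨Nat.nth (· ∈ H), Nat.nth_strictMono hH, fun i j hi hj =>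
    hom _ _ ((Nat.nth_strictMono hH).comp hi) ((Nat.nth_strictMono hH).comp hj)
      (range_subset_iff.2 fun _ => hmem _) (range_subset_iff.2 fun _ => hmem _)⟩

theorem exists_strictMono_forall_homogeneous {ι : Type*} (s : Finset ι) (k : ι → ℕ)
    (P : ∀ x, (Fin (k x) → ℕ) → Prop) :
    ∃ h : ℕ → ℕ, StrictMono h ∧ ∀ x ∈ s, ∀ i j : Fin (k x) → ℕ, StrictMono i → StrictMono j →
      (P x (h ∘ i) ↔ P x (h ∘ j)) := by
  classical
  induction s using Finset.induction_on with
  | empty => exact ⟨id, strictMono_id, by simp⟩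
  | insert x s _ ih =>
    obtain ⟨h, hh, hom⟩ := ih
    obtain ⟨g, hg, homx⟩ := exists_strictMono_homogeneous fun i => P x (h ∘ i)
    refine ⟨h ∘ g, hh.comp hg, fun y hy i j hi hj => ?_⟩
    rcases Finset.mem_insert.1 hy with rfl | hy
    · exact homx i j hi hj
    · exact hom y hy _ _ (hg.comp hi) (hg.comp hj)

theorem IsSaturated.exists_forall_realize {L : FirstOrder.Language.{0, 0}} {M : Type}
    [L.Structure M] {κ : Cardinal.{0}} (hsat : IsSaturated L M κ) (hκ : ℵ₀ < κ) {β γ : Type}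
    [Countable β] [Countable γ] (x : β → M) {D : Type*} (θ : D → L.Formula (β ⊕ γ))
    (hθ : ∀ s : Finset D, ∃ y : γ → M, ∀ d ∈ s, (θ d).Realize (Sum.elim x y)) :
    ∃ y : γ → M, ∀ d, (θ d).Realize (Sum.elim x y) := by
  classical
  let g : β ⊕ γ → γ ⊕ range x := Sum.elim (fun b => .inr ⟨x b, b, rfl⟩) .inl
  have realize_relabel_g (y : γ → M) (d : D) :
      ((θ d).relabel g).Realize (Sum.elim y Subtype.val) ↔ (θ d).Realize (Sum.elim x y) := by
    rw [Formula.realize_relabel]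
    exact iff_of_eq (congrArg _ (funext fun b => by cases b <;> rfl))
  have : Countable (range x) := (countable_range x).to_subtype
  obtain ⟨y, hy⟩ := hsat γ (mk_le_aleph0.trans_lt hκ) (range x) (mk_le_aleph0.trans_lt hκ)
    (range fun d => (θ d).relabel g) fun s hs => by
      obtain ⟨s', -, rfl⟩ := Finset.subset_set_image_iff.1 (hs.trans_eq image_univ.symm)
      obtain ⟨y, hy⟩ := hθ s'
      exact ⟨y, by simpa [realize_relabel_g] using hy⟩
  exact ⟨y, fun d => (realize_relabel_g y d).1 (hy _ ⟨d, rfl⟩)⟩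

def IsIndiscernibleSeq (L : FirstOrder.Language) {M : Type*} [L.Structure M] {ι : Type*}
    (e : ℕ → ι → M) : Prop :=
  ∀ (k : ℕ) (ψ : L.Formula (Fin k × ι)) (i j : Fin k → ℕ), StrictMono i → StrictMono j →
    (ψ.Realize (fun v => e (i v.1) v.2) ↔ ψ.Realize (fun v => e (j v.1) v.2))

namespace IsIndiscernibleSeq

variable {L : FirstOrder.Language} {M : Type*} [L.Structure M] {ι : Type*}

theorem comp_right {e : ℕ → ι → M} (he : IsIndiscernibleSeq L e) {ι' : Type*} (f : ι' → ι) :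
    IsIndiscernibleSeq L fun n => e n ∘ f :=
  fun k ψ i j hi hj => Formula.realize_relabel.symm.trans
    ((he k (ψ.relabel (Prod.map id f)) i j hi hj).trans Formula.realize_relabel)

theorem exists_realize_iff {α β : Type*} [Finite β] {a : ℕ → α → M}
    (ha : IsIndiscernibleSeq L a) {N : ℕ} (θ : L.Formula (Fin N × (α ⊕ β))) {i j : Fin N → ℕ}
    (hi : StrictMono i) (hj : StrictMono j) :
    (∃ y : Fin N → β → M, θ.Realize fun v => Sum.elim (a (i v.1)) (y v.1) v.2) ↔
      ∃ y : Fin N → β → M, θ.Realize fun v => Sum.elim (a (j v.1)) (y v.1) v.2 := by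
  have realize_iExs (i : Fin N → ℕ) :
      ((θ.relabel (Equiv.prodSumDistrib _ _ _)).iExs (Fin N × β)).Realize
          (fun v => a (i v.1) v.2) ↔
        ∃ y : Fin N → β → M, θ.Realize fun v => Sum.elim (a (i v.1)) (y v.1) v.2 := by
    rw [Formula.realize_iExs, ← (Equiv.curry _ _ _).symm.exists_congr_right]
    refine exists_congr fun y => Formula.realize_relabel.trans (iff_of_eq (congrArg _ ?_))
    funext ⟨n, s⟩
    cases s <;> rfl
  rw [← realize_iExs, ← realize_iExs]
  exact ha N _ i j hi hj

theorem exists_witness {α β : Type*} [Finite β] {a : ℕ → α → M} (ha : IsIndiscernibleSeq L a)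
    {φ : L.Formula (α ⊕ β)} {i : ℕ} (hi : ∃ y, φ.Realize (Sum.elim (a i) y)) (j : ℕ) :
    ∃ y, φ.Realize (Sum.elim (a j) y) := by
  have key (n : ℕ) : (∃ y : Fin 1 → β → M, (φ.relabel ((0, ·))).Realize
      fun v => Sum.elim (a ((fun _ => n) v.1)) (y v.1) v.2) ↔
        ∃ y, φ.Realize (Sum.elim (a n) y) := by
    simp only [Formula.realize_relabel]
    exact ⟨fun ⟨y, hy⟩ => ⟨y 0, hy⟩, fun ⟨y, hy⟩ => ⟨fun _ => y, hy⟩⟩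
  exact (key j).1 ((ha.exists_realize_iff _ (Subsingleton.strictMono fun _ : Fin 1 => i)
    (Subsingleton.strictMono fun _ : Fin 1 => j)).1 ((key i).2 hi))

end IsIndiscernibleSeq

/-- The requirements on a sequence `e` of `γ`-tuples to be an indiscernible sequence all of whose
terms satisfy `φ`: `inl n` asks for `φ (e n)`, and `inr ⟨k, ψ, i, j⟩` asks that `ψ` hold of
`e ∘ i` iff it holds of `e ∘ j`. -/
abbrev Requirement (L : FirstOrder.Language) (γ : Type*) : Type _ :=
  ℕ ⊕ Σ k : ℕ, L.Formula (Fin k × γ) × (Fin k ↪o ℕ) × (Fin k ↪o ℕ)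

namespace Requirement

variable {L : FirstOrder.Language} {M : Type*} [L.Structure M] {γ : Type*}

def Holds (φ : L.Formula γ) (e : ℕ → γ → M) : Requirement L γ → Prop
  | .inl n => φ.Realize (e n)
  | .inr ⟨_, ψ, i, j⟩ => ψ.Realize (fun v => e (i v.1) v.2) ↔ ψ.Realize (fun v => e (j v.1) v.2)

def formula (φ : L.Formula γ) : Requirement L γ → L.Formula (ℕ × γ)
  | .inl n => φ.relabel ((n, ·))
  | .inr ⟨_, ψ, i, j⟩ => (ψ.relabel (Prod.map i id)).iff (ψ.relabel (Prod.map j id))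

theorem realize_formula (φ : L.Formula γ) (e : ℕ → γ → M) (r : Requirement L γ) :
    (r.formula φ).Realize (fun v => e v.1 v.2) ↔ r.Holds φ e := by
  rcases r with n | ⟨k, ψ, i, j⟩
  · exact Formula.realize_relabel
  · exact Formula.realize_iff.trans (iff_congr Formula.realize_relabel Formula.realize_relabel)

def IsBoundedBy (b : ℕ × Finset (Σ k : ℕ, L.Formula (Fin k × γ))) : Requirement L γ → Prop
  | .inl n => n < b.1
  | .inr ⟨k, ψ, i, j⟩ => ⟨k, ψ⟩ ∈ b.2 ∧ ∀ l, i l < b.1 ∧ j l < b.1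

theorem IsBoundedBy.mono {r : Requirement L γ}
    {b b' : ℕ × Finset (Σ k : ℕ, L.Formula (Fin k × γ))} (hr : r.IsBoundedBy b) (hb : b ≤ b') :
    r.IsBoundedBy b' := by
  rcases r with n | ⟨k, ψ, i, j⟩
  · exact hr.trans_le hb.1
  · exact ⟨hb.2 hr.1, fun l => ⟨(hr.2 l).1.trans_le hb.1, (hr.2 l).2.trans_le hb.1⟩⟩

theorem exists_isBoundedBy (r : Requirement L γ) : ∃ b, r.IsBoundedBy b := by
  rcases r with n | ⟨k, ψ, i, j⟩
  · exact ⟨(n + 1, ∅), Nat.lt_succ_self n⟩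
  · obtain ⟨N, hN⟩ := (finite_range fun l => max (i l) (j l)).bddAbove
    exact ⟨(N + 1, {⟨k, ψ⟩}), Finset.mem_singleton_self _, fun l =>
      have h := hN ⟨l, rfl⟩
      ⟨Nat.lt_succ_of_le ((le_max_left _ _).trans h),
        Nat.lt_succ_of_le ((le_max_right _ _).trans h)⟩⟩

theorem isIndiscernibleSeq_of_forall_holds {φ : L.Formula γ} {e : ℕ → γ → M}
    (h : ∀ r : Requirement L γ, r.Holds φ e) : IsIndiscernibleSeq L e :=
  fun k ψ i j hi hj => h (.inr ⟨k, ψ, .ofStrictMono i hi, .ofStrictMono j hj⟩)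

section Approximation

variable {α β : Type*} [Finite β] {a : ℕ → α → M} {φ : L.Formula (α ⊕ β)}
  {c : ℕ → β → M}

theorem exists_holds_of_isBoundedBy (ha : IsIndiscernibleSeq L a)
    (hc : ∀ n, φ.Realize (Sum.elim (a n) (c n)))
    (b : ℕ × Finset (Σ k : ℕ, L.Formula (Fin k × (α ⊕ β)))) :
    ∃ y : ℕ → β → M, ∀ r : Requirement L (α ⊕ β), r.IsBoundedBy b →
      r.Holds φ (fun n => Sum.elim (a n) (y n)) := by
  obtain ⟨N, T⟩ := b
  obtain ⟨h, hh, hom⟩ := exists_strictMono_forall_homogeneous T Sigma.fst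
    fun t m => t.2.Realize fun v => Sum.elim (a (m v.1)) (c (m v.1)) v.2
  let θ : L.Formula (Fin N × (α ⊕ β)) :=
    (Formula.iInf fun n : Fin N => φ.relabel ((n, ·))) ⊓
      Formula.iInf fun x : Σ t : T, (Fin t.1.1 ↪o Fin N) × (Fin t.1.1 ↪o Fin N) =>
        (x.1.1.2.relabel (Prod.map x.2.1 id)).iff (x.1.1.2.relabel (Prod.map x.2.2 id))
  have realize_θ (e : Fin N → α ⊕ β → M) : θ.Realize (fun v => e v.1 v.2) ↔
      (∀ n, φ.Realize (e n)) ∧ ∀ t ∈ T, ∀ i j : Fin t.1 ↪o Fin N,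
        (t.2.Realize fun v => e (i v.1) v.2) ↔ t.2.Realize fun v => e (j v.1) v.2 := by
    simp only [θ, Formula.realize_inf, Formula.realize_iInf, Formula.realize_iff,
      Formula.realize_relabel, Sigma.forall, Subtype.forall, Prod.forall]
    rfl
  obtain ⟨y, hy⟩ := (ha.exists_realize_iff θ (hh.comp Fin.val_strictMono) Fin.val_strictMono).1
    ⟨fun n => c (h n), (realize_θ _).2 ⟨fun n => hc _, fun t ht i j => hom t ht _ _
      (Fin.val_strictMono.comp i.strictMono) (Fin.val_strictMono.comp j.strictMono)⟩⟩
  obtain ⟨hyφ, hyT⟩ := (realize_θ fun n => Sum.elim (a n) (y n)).1 hy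
  refine ⟨fun n => if hn : n < N then y ⟨n, hn⟩ else c n, ?_⟩
  rintro (n | ⟨k, ψ, i, j⟩) hr
  · have hn : n < N := hr
    simpa [Holds, hn] using hyφ ⟨n, hn⟩
  · let i' : Fin k ↪o Fin N :=
      .ofStrictMono (fun l => ⟨i l, (hr.2 l).1⟩) fun _ _ h => i.strictMono h
    let j' : Fin k ↪o Fin N :=
      .ofStrictMono (fun l => ⟨j l, (hr.2 l).2⟩) fun _ _ h => j.strictMono h
    simp only [Holds, hr.2, dite_true]
    exact hyT _ hr.1 i' j'

theorem exists_forall_mem_holds (ha : IsIndiscernibleSeq L a)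
    (hc : ∀ n, φ.Realize (Sum.elim (a n) (c n)))
    (s : Finset (Requirement L (α ⊕ β))) :
    ∃ y : ℕ → β → M, ∀ r ∈ s, r.Holds φ (fun n => Sum.elim (a n) (y n)) := by
  classical
  choose bound hbound using exists_isBoundedBy (L := L) (γ := α ⊕ β)
  obtain ⟨b, hb⟩ := (s.image bound).exists_le
  obtain ⟨y, hy⟩ := exists_holds_of_isBoundedBy ha hc b
  exact ⟨y, fun r hr => hy r ((hbound r).mono (hb _ (Finset.mem_image_of_mem _ hr)))⟩

end Approximation

end Requirement

theorem exists_indiscernibleSeq_witnesses {L : FirstOrder.Language.{0, 0}} {M : Type}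
    [L.Structure M] {κ : Cardinal.{0}} (hsat : IsSaturated L M κ) (hκ : ℵ₀ < κ) {α β : Type}
    [Countable α] [Finite β] {a : ℕ → α → M} (ha : IsIndiscernibleSeq L a)
    {φ : L.Formula (α ⊕ β)} {c : ℕ → β → M} (hc : ∀ n, φ.Realize (Sum.elim (a n) (c n))) :
    ∃ b : ℕ → β → M, IsIndiscernibleSeq L (fun n => Sum.elim (a n) (b n)) ∧
      ∀ n, φ.Realize (Sum.elim (a n) (b n)) := by
  have realize_relabel (r : Requirement L (α ⊕ β)) (y : ℕ × β → M) :
      ((r.formula φ).relabel (Equiv.prodSumDistrib ℕ α β)).Realize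
          (Sum.elim (fun v => a v.1 v.2) y) ↔
        r.Holds φ fun n => Sum.elim (a n) fun j => y (n, j) := by
    rw [Formula.realize_relabel, ← Requirement.realize_formula]
    exact iff_of_eq (congrArg _ (funext fun ⟨n, s⟩ => by cases s <;> rfl))
  obtain ⟨y, hy⟩ := hsat.exists_forall_realize hκ (fun v : ℕ × α => a v.1 v.2)
    (fun r : Requirement L (α ⊕ β) => (r.formula φ).relabel (Equiv.prodSumDistrib ℕ α β))
    fun s => by
      obtain ⟨y, hy⟩ := Requirement.exists_forall_mem_holds ha hc s
      exact ⟨fun v => y v.1 v.2, fun r hr => (realize_relabel r _).2 (hy r hr)⟩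
  have holds (r : Requirement L (α ⊕ β)) := (realize_relabel r y).1 (hy r)
  exact ⟨fun n j => y (n, j), Requirement.isIndiscernibleSeq_of_forall_holds holds,
    fun n => holds (.inl n)⟩

theorem statement_0_general (L : FirstOrder.Language.{0, 0})
    (M : Type) [L.Structure M]
    (κ : Cardinal.{0}) (hκ : L.card + Cardinal.aleph0 < κ)
    (hsat : IsSaturated L M κ)
    (p q : ℕ) (a : ℕ → Fin p → M) (ha : IsIndiscernible L a)
    (φ : L.Formula (Fin p ⊕ Fin q))
    (hφ : ∃ (i : ℕ) (y : Fin q → M), φ.Realize (Sum.elim (a i) y)) :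
    ∃ b : ℕ → Fin q → M, IsIndiscernible L b ∧
      ∀ i : ℕ, φ.Realize (Sum.elim (a i) (b i)) := by
  have ha' : IsIndiscernibleSeq L a := ha
  obtain ⟨i, hi⟩ := hφ
  choose c hc using ha'.exists_witness hi
  obtain ⟨b, hb, hφb⟩ := exists_indiscernibleSeq_witnesses hsat (le_add_self.trans_lt hκ) ha' hc
  exact ⟨b, hb.comp_right Sum.inr, hφb⟩

/-- Proposition 2.2 of "Dependent Pairs": in a sufficiently saturated model,
an indiscernible sequence `(a⃗ᵢ)` such that `∃ y⃗ φ(a⃗ᵢ, y⃗)` holds for some `i` can be completed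
to an indiscernible sequence of witnesses `(b⃗ᵢ)` with `φ(a⃗ᵢ, b⃗ᵢ)` for all `i`. -/
theorem statement_0 (L : FirstOrder.Language.{0, 0}) (T' : L.Theory)
    (M : Type) [L.Structure M] (hM : T'.Model M)
    (κ : Cardinal.{0}) (hκ : L.card + Cardinal.aleph0 < κ)
    (hsat : IsSaturated L M κ)
    (p q : ℕ) (a : ℕ → Fin p → M) (ha : IsIndiscernible L a)
    (φ : L.Formula (Fin p ⊕ Fin q))
    (hφ : ∃ (i : ℕ) (y : Fin q → M), φ.Realize (Sum.elim (a i) y)) :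
    ∃ b : ℕ → Fin q → M, IsIndiscernible L b ∧
      ∀ i : ℕ, φ.Realize (Sum.elim (a i) (b i)) :=
  statement_0_general L M κ hκ hsat p q a ha φ hφ

end PaperDep
end

section
/- Let T' be a theory in a first-order language L' and let M be a model of T' that is κ-saturated for some κ > |L'| + ℵ₀. Let (a⃗_i)_{i∈ω} be an indiscernible sequence of p-tuples from M, let b⃗ ∈ M^q, and let ψ(x⃗,y⃗) be an L'-formula such that both {i ∈ ω : M ⊨ ψ(a⃗_i, b⃗)} and {i ∈ ω : M ⊨ ¬ψ(a⃗_i, b⃗)} are infinite. Then there is a sequence (c⃗_i)_{i∈ω} of p-tuples from M such that: (1) the subsequence (c⃗_{2i})_{i∈ω} is indiscernible over b⃗; (2) M ⊨ ψ(c⃗_i, b⃗) if and only if i is even; and (3) for every k and every L'-formula φ in k·p free variables, M ⊨ φ(c⃗_0,…,c⃗_{k−1}) if and only if M ⊨ φ(a⃗_0,…,a⃗_{k−1}). -/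
open FirstOrder FirstOrder.Language FirstOrder.Language.Structure Cardinal Set

/-! By saturation it suffices to show that the partial type over `b⃗` describing `c⃗` is finitely
satisfiable. Finitely many of its formulas involve finitely many colourings of increasing tuples
of indices; infinite Ramsey gives an infinite set `H` of indices with `ψ(a⃗ᵢ, b⃗)` homogeneous for
all of them, and a subsequence of `a⃗` taking its even terms from `H` and its odd terms from
`{i | ¬ψ(a⃗ᵢ, b⃗)}` realizes those formulas; the formulas copying the type of `a⃗` hold for every
subsequence by indiscernibility. -/

namespace PaperDep

theorem exists_infinite_homogeneous {κ : Type*} [Finite κ] (r : ℕ) (C : (Fin r → ℕ) → κ)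
    {P : Set ℕ} (hP : P.Infinite) :
    ∃ H ⊆ P, H.Infinite ∧ ∃ c, ∀ f : Fin r → ℕ, StrictMono f → (∀ t, f t ∈ H) → C f = c := by
  induction r generalizing P with
  | zero => exact ⟨P, subset_rfl, hP, C Fin.elim0, fun f _ _ => congrArg C (Subsingleton.elim _ _)⟩
  | succ r ih =>
    -- Each infinite `S` splits off a point `x` and an infinite `S' > x` on which `C (x, ·)` is
    -- constant; iterating this and thinning out by the pigeonhole principle gives `H`.
    have step : ∀ S : {S : Set ℕ // S.Infinite}, ∃ x ∈ S.1, ∃ S' : {S' : Set ℕ // S'.Infinite},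
        S'.1 ⊆ S.1 ∩ Set.Ioi x ∧ ∃ c, ∀ g : Fin r → ℕ, StrictMono g → (∀ t, g t ∈ S'.1) →
          C (Fin.cons x g) = c := by
      rintro ⟨S, hS⟩
      obtain ⟨x, hx⟩ := hS.nonempty
      obtain ⟨S', hS'sub, hS'inf, hS'⟩ :=
        ih (fun g => C (Fin.cons x g)) (hS.sdiff (Set.finite_Iic x))
      refine ⟨x, hx, ⟨S', hS'inf⟩, fun y hy => ?_, hS'⟩
      exact ⟨(hS'sub hy).1, Set.mem_Ioi.mpr (not_le.mp (hS'sub hy).2)⟩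
    choose x hx next hnext color hcolor using step
    set chain : ℕ → {S : Set ℕ // S.Infinite} := fun n => next^[n] ⟨P, hP⟩
    have chain_anti : Antitone fun n => (chain n).1 := antitone_nat_of_succ_le fun n => by
      simp only [chain, Function.iterate_succ_apply']
      exact fun y hy => (hnext _ hy).1
    have x_mono : StrictMono fun n => x (chain n) := strictMono_nat_of_lt_succ fun n => by
      have := (hnext (chain n) (hx (next (chain n)))).2
      simpa only [chain, Function.iterate_succ_apply', Set.mem_Ioi] using this
    obtain ⟨c, hc⟩ := Finite.exists_infinite_fiber fun n => color (chain n)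
    refine ⟨(fun n => x (chain n)) '' {n | color (chain n) = c}, ?_,
      (Set.infinite_coe_iff.mp hc).image x_mono.injective.injOn, c, ?_⟩
    · rintro _ ⟨n, -, rfl⟩
      exact chain_anti (Nat.zero_le n) (hx (chain n))
    · intro f hf hfH
      choose m hm hmf using hfH
      have m_mono : StrictMono m := fun s t hst => x_mono.lt_iff_lt.mp (by simpa [hmf] using hf hst)
      rw [← Fin.cons_self_tail f, ← hmf 0, hcolor (chain (m 0)) (Fin.tail f)
        (hf.comp Fin.strictMono_succ) fun t => ?_]
      · exact hm 0
      · rw [Fin.tail, ← hmf t.succ]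
        have hle : m 0 + 1 ≤ m t.succ := m_mono (Fin.succ_pos t)
        have := chain_anti hle (hx (chain (m t.succ)))
        simpa only [chain, Function.iterate_succ_apply', Set.mem_Ioi] using this

theorem exists_strictMono_forall_mem {S : ℕ → Set ℕ} (hS : ∀ i, (S i).Infinite) :
    ∃ n : ℕ → ℕ, StrictMono n ∧ ∀ i, n i ∈ S i := by
  choose next hnext hlt using fun i x => (hS i).exists_gt x
  let n : ℕ → ℕ := fun i => Nat.rec (next 0 0) (fun i prev => next (i + 1) prev) i
  refine ⟨n, strictMono_nat_of_lt_succ fun i => hlt (i + 1) (n i), fun i => ?_⟩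
  cases i with
  | zero => exact hnext 0 0
  | succ i => exact hnext (i + 1) (n i)

section

variable {L : FirstOrder.Language.{0, 0}} {M : Type} [L.Structure M] {p q : ℕ}

theorem realize_relabel_sumMap {α β γ δ : Type*} (φ : L.Formula (α ⊕ β)) (f : α → γ)
    (g : β → δ) (v : γ → M) (w : δ → M) :
    (φ.relabel (Sum.map f g)).Realize (Sum.elim v w) ↔ φ.Realize (Sum.elim (v ∘ f) (w ∘ g)) := by
  rw [Formula.realize_relabel, Sum.elim_comp_map]

theorem IsSaturated.exists_forall_realize_s1 {κ : Cardinal.{0}} (hsat : IsSaturated L M κ)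
    (hκ : ℵ₀ < κ) {α : Type} [Countable α] (b : Fin q → M)
    (S : Set (L.Formula (α ⊕ Fin q)))
    (hS : ∀ s : Finset (L.Formula (α ⊕ Fin q)), ↑s ⊆ S →
      ∃ v : α → M, ∀ φ ∈ s, φ.Realize (Sum.elim v b)) :
    ∃ v : α → M, ∀ φ ∈ S, φ.Realize (Sum.elim v b) := by
  classical
  let toRange : L.Formula (α ⊕ Fin q) → L.Formula (α ⊕ Set.range b) :=
    fun φ => φ.relabel (Sum.map id (Set.rangeFactorization b))
  have realize_toRange : ∀ φ v, (toRange φ).Realize (Sum.elim v Subtype.val) ↔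
      φ.Realize (Sum.elim v b) := fun φ v => realize_relabel_sumMap ..
  obtain ⟨v, hv⟩ := hsat α (Cardinal.mk_le_aleph0.trans_lt hκ) _
      (Cardinal.mk_lt_aleph0.trans hκ) (toRange '' S) fun s hs => by
    obtain ⟨s, hsS, rfl⟩ := Finset.subset_set_image_iff.mp hs
    obtain ⟨v, hv⟩ := hS s hsS
    exact ⟨v, by simpa only [Finset.forall_mem_image, realize_toRange] using hv⟩
  exact ⟨v, fun φ hφ => (realize_toRange φ v).mp (hv _ (Set.mem_image_of_mem _ hφ))⟩

/-- The partial type over `b⃗` whose realizations are the sequences `c⃗` of the theorem; the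
variable `(i, j)` stands for the `j`-th entry of `c⃗ᵢ`. -/
def evenOddType (a : ℕ → Fin p → M) (ψ : L.Formula (Fin p ⊕ Fin q)) :
    Set (L.Formula ((ℕ × Fin p) ⊕ Fin q)) :=
  Set.range (fun i => ψ.relabel (Sum.map (fun j => (2 * i, j)) id)) ∪
  Set.range (fun i => (ψ.relabel (Sum.map (fun j => (2 * i + 1, j)) id)).not) ∪
  {F | ∃ (k : ℕ) (φ : L.Formula (Fin k × Fin p)), φ.Realize (fun u => a u.1 u.2) ∧
      F = φ.relabel fun u => Sum.inl ((u.1 : ℕ), u.2)} ∪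
  {F | ∃ (k : ℕ) (φ : L.Formula ((Fin k × Fin p) ⊕ Fin q)) (i j : Fin k → ℕ),
      StrictMono i ∧ StrictMono j ∧
      F = (φ.relabel (Sum.map (fun u => (2 * i u.1, u.2)) id) ⇔
        φ.relabel (Sum.map (fun u => (2 * j u.1, u.2)) id))}

theorem of_forall_realize_evenOddType {a c : ℕ → Fin p → M} {b : Fin q → M}
    {ψ : L.Formula (Fin p ⊕ Fin q)}
    (hc : ∀ F ∈ evenOddType a ψ, F.Realize (Sum.elim (fun u => c u.1 u.2) b)) :
    IsIndiscernibleOver L (fun i => c (2 * i)) b ∧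
      (∀ i : ℕ, ψ.Realize (Sum.elim (c i) b) ↔ Even i) ∧
      ∀ (k : ℕ) (φ : L.Formula (Fin k × Fin p)),
        (φ.Realize (fun v => c v.1 v.2) ↔ φ.Realize (fun v => a v.1 v.2)) := by
  refine ⟨fun k φ i j hi hj => ?_, fun i => ?_, fun k φ => ?_⟩
  · have := hc _ (Set.mem_union_right _ ⟨k, φ, i, j, hi, hj, rfl⟩)
    rw [Formula.realize_iff, realize_relabel_sumMap, realize_relabel_sumMap] at this
    exact this
  · obtain ⟨m, rfl | rfl⟩ := Nat.even_or_odd' i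
    · have := hc _ (.inl (.inl (.inl ⟨m, rfl⟩)))
      rw [realize_relabel_sumMap] at this
      exact iff_of_true this (even_two_mul m)
    · have := hc _ (.inl (.inl (.inr ⟨m, rfl⟩)))
      rw [Formula.realize_not, realize_relabel_sumMap] at this
      exact iff_of_false this (Nat.not_even_two_mul_add_one m)
  · have realize_em : ∀ φ : L.Formula (Fin k × Fin p), φ.Realize (fun u => a u.1 u.2) →
        φ.Realize (fun u => c u.1 u.2) := fun φ hφ =>
      (Formula.realize_relabel ..).mp (hc _ (.inl (.inr ⟨k, φ, hφ, rfl⟩)))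
    by_cases ha : φ.Realize (fun u => a u.1 u.2)
    · exact iff_of_true (realize_em φ ha) ha
    · exact iff_of_false (fun hcφ => realize_em φ.not ha hcφ) ha

def SubseqForces (a : ℕ → Fin p → M) (b : Fin q → M) (H N : Set ℕ)
    (F : L.Formula ((ℕ × Fin p) ⊕ Fin q)) : Prop :=
  ∀ n : ℕ → ℕ, StrictMono n → (∀ i, n (2 * i) ∈ H) → (∀ i, n (2 * i + 1) ∈ N) →
    F.Realize (Sum.elim (fun u => a (n u.1) u.2) b)

theorem SubseqForces.mono {a : ℕ → Fin p → M} {b : Fin q → M} {H H' N : Set ℕ}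
    {F : L.Formula ((ℕ × Fin p) ⊕ Fin q)} (hF : SubseqForces a b H N F) (hH : H' ⊆ H) :
    SubseqForces a b H' N F :=
  fun n hn hnH hnN => hF n hn (fun i => hH (hnH i)) hnN

theorem exists_subseqForces {a : ℕ → Fin p → M} (ha : IsIndiscernible L a) (b : Fin q → M)
    {ψ : L.Formula (Fin p ⊕ Fin q)} {F : L.Formula ((ℕ × Fin p) ⊕ Fin q)}
    (hF : F ∈ evenOddType a ψ) {H : Set ℕ} (hHψ : H ⊆ {i | ψ.Realize (Sum.elim (a i) b)})
    (hH : H.Infinite) :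
    ∃ H' ⊆ H, H'.Infinite ∧
      SubseqForces a b H' {i | ¬ ψ.Realize (Sum.elim (a i) b)} F := by
  rcases hF with ((⟨i, rfl⟩ | ⟨i, rfl⟩) | ⟨k, φ, hφ, rfl⟩) | ⟨k, φ, i, j, hi, hj, rfl⟩
  · refine ⟨H, subset_rfl, hH, fun n _ hnH _ => ?_⟩
    rw [realize_relabel_sumMap]
    exact hHψ (hnH i)
  · refine ⟨H, subset_rfl, hH, fun n _ _ hnN => ?_⟩
    rw [Formula.realize_not, realize_relabel_sumMap]
    exact hnN i
  · refine ⟨H, subset_rfl, hH, fun n hn _ _ => ?_⟩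
    rw [Formula.realize_relabel]
    exact (ha k φ (fun t => n t) Fin.val (hn.comp Fin.val_strictMono) Fin.val_strictMono).mpr hφ
  · obtain ⟨H', hH'H, hH', c, hc⟩ := exists_infinite_homogeneous k
      (fun m => φ.Realize (Sum.elim (fun u => a (m u.1) u.2) b)) hH
    refine ⟨H', hH'H, hH', fun n hn hnH _ => ?_⟩
    have hmono : ∀ {i : Fin k → ℕ}, StrictMono i → StrictMono fun t => n (2 * i t) :=
      fun hi => hn.comp ((strictMono_mul_left_of_pos two_pos).comp hi)
    rw [Formula.realize_iff, realize_relabel_sumMap, realize_relabel_sumMap]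
    exact Iff.of_eq ((hc _ (hmono hi) fun t => hnH (i t)).trans
      (hc _ (hmono hj) fun t => hnH (j t)).symm)

theorem exists_subseqForces_finset {a : ℕ → Fin p → M} (ha : IsIndiscernible L a)
    (b : Fin q → M) {ψ : L.Formula (Fin p ⊕ Fin q)}
    (hpos : {i | ψ.Realize (Sum.elim (a i) b)}.Infinite)
    (s : Finset (L.Formula ((ℕ × Fin p) ⊕ Fin q))) (hs : ↑s ⊆ evenOddType a ψ) :
    ∃ H ⊆ {i | ψ.Realize (Sum.elim (a i) b)}, H.Infinite ∧
      ∀ F ∈ s, SubseqForces a b H {i | ¬ ψ.Realize (Sum.elim (a i) b)} F := by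
  classical
  induction s using Finset.induction_on with
  | empty => exact ⟨_, subset_rfl, hpos, fun F hF => absurd hF (Finset.notMem_empty F)⟩
  | insert F s _ ih =>
    rw [Finset.coe_insert, Set.insert_subset_iff] at hs
    obtain ⟨H, hHψ, hH, hsH⟩ := ih hs.2
    obtain ⟨H', hH'H, hH', hF⟩ := exists_subseqForces ha b hs.1 hHψ hH
    refine ⟨H', hH'H.trans hHψ, hH', Finset.forall_mem_insert _ _ _ |>.mpr ⟨hF, ?_⟩⟩
    exact fun G hG => (hsH G hG).mono hH'H

theorem evenOddType_finitelySatisfiable {a : ℕ → Fin p → M} (ha : IsIndiscernible L a)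
    (b : Fin q → M) {ψ : L.Formula (Fin p ⊕ Fin q)}
    (hpos : {i | ψ.Realize (Sum.elim (a i) b)}.Infinite)
    (hneg : {i | ¬ ψ.Realize (Sum.elim (a i) b)}.Infinite)
    (s : Finset (L.Formula ((ℕ × Fin p) ⊕ Fin q))) (hs : ↑s ⊆ evenOddType a ψ) :
    ∃ v : ℕ × Fin p → M, ∀ F ∈ s, F.Realize (Sum.elim v b) := by
  obtain ⟨H, -, hH, hs⟩ := exists_subseqForces_finset ha b hpos s hs
  obtain ⟨n, hn, hnS⟩ := exists_strictMono_forall_mem (S := fun i => if Even i then H else _)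
    fun i => by split_ifs; exacts [hH, hneg]
  refine ⟨fun u => a (n u.1) u.2, fun F hF => hs F hF n hn (fun i => ?_) fun i => ?_⟩
  · simpa [even_two_mul] using hnS (2 * i)
  · simpa [Nat.not_even_two_mul_add_one] using hnS (2 * i + 1)

end

theorem statement_1_general (L : FirstOrder.Language.{0, 0})
    (M : Type) [L.Structure M]
    (κ : Cardinal.{0}) (hκ : L.card + Cardinal.aleph0 < κ)
    (hsat : IsSaturated L M κ)
    (p q : ℕ) (a : ℕ → Fin p → M) (ha : IsIndiscernible L a)
    (b : Fin q → M) (ψ : L.Formula (Fin p ⊕ Fin q))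
    (hpos : {i : ℕ | ψ.Realize (Sum.elim (a i) b)}.Infinite)
    (hneg : {i : ℕ | ¬ ψ.Realize (Sum.elim (a i) b)}.Infinite) :
    ∃ c : ℕ → Fin p → M,
      IsIndiscernibleOver L (fun i => c (2 * i)) b ∧
      (∀ i : ℕ, ψ.Realize (Sum.elim (c i) b) ↔ Even i) ∧
      ∀ (k : ℕ) (φ : L.Formula (Fin k × Fin p)),
        (φ.Realize (fun v => c v.1 v.2) ↔ φ.Realize (fun v => a v.1 v.2)) := by
  obtain ⟨v, hv⟩ := hsat.exists_forall_realize_s1 (le_add_self.trans_lt hκ) b (evenOddType a ψ)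
    (evenOddType_finitelySatisfiable ha b hpos hneg)
  exact ⟨fun i j => v (i, j), of_forall_realize_evenOddType (c := fun i j => v (i, j)) hv⟩

/-- Proposition 2.3 of "Dependent Pairs": if `ψ(a⃗ᵢ, b⃗)` holds for
infinitely many `i` and fails for infinitely many `i`, then there is a sequence `(c⃗ᵢ)`
whose even-indexed subsequence is indiscernible over `b⃗`, with `ψ(c⃗ᵢ, b⃗)` holding exactly
for even `i`, and realizing the same formulas at initial segments as `(a⃗ᵢ)`. -/
theorem statement_1 (L : FirstOrder.Language.{0, 0}) (T' : L.Theory)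
    (M : Type) [L.Structure M] (hM : T'.Model M)
    (κ : Cardinal.{0}) (hκ : L.card + Cardinal.aleph0 < κ)
    (hsat : IsSaturated L M κ)
    (p q : ℕ) (a : ℕ → Fin p → M) (ha : IsIndiscernible L a)
    (b : Fin q → M) (ψ : L.Formula (Fin p ⊕ Fin q))
    (hpos : {i : ℕ | ψ.Realize (Sum.elim (a i) b)}.Infinite)
    (hneg : {i : ℕ | ¬ ψ.Realize (Sum.elim (a i) b)}.Infinite) :
    ∃ c : ℕ → Fin p → M,
      IsIndiscernibleOver L (fun i => c (2 * i)) b ∧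
      (∀ i : ℕ, ψ.Realize (Sum.elim (c i) b) ↔ Even i) ∧
      ∀ (k : ℕ) (φ : L.Formula (Fin k × Fin p)),
        (φ.Realize (fun v => c v.1 v.2) ↔ φ.Realize (fun v => a v.1 v.2)) :=
  statement_1_general L M κ hκ hsat p q a ha b ψ hpos hneg

end PaperDep
end

section
/- Let R̃ be an o-minimal expansion of the ordered real field (ℝ,<,+,·,0,1) that is polynomially bounded with field of exponents ℚ, let T be its complete theory in a language L for which T admits quantifier elimination and a universal axiomatization, let λ : ℝ → 2^ℤ ∪ {0} be defined by λ(x) = the unique g ∈ 2^ℤ with g ≤ x < 2g for x > 0 and λ(x) = 0 for x ≤ 0, and let T_disc be the complete theory of (R̃, λ) in L(λ) = L ∪ {λ}. Let (B,λ) ⪯ (A,λ) be models of T_disc and let g ∈ G_A := λ(A) ∖ {0} with g ∉ G_B := λ(B) ∖ {0}. Then there are no b ∈ B with b ≠ 0 and positive integer n such that 1/n ≤ g/b ≤ n. -/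
open FirstOrder FirstOrder.Language FirstOrder.Language.Structure Cardinal Set

namespace PaperDep

/-!
If `1/n ≤ g/b ≤ n`, some `y = b·2^j` lies in `[g, 2g)`. The sentences `∀ x, 0 ≤ λ x` and
`∀ x y, λ x ≤ y < 2 λ x → λ y = λ x` hold in `(ℝ, λ)`, hence in `(A, λ)`, so `λ y = g` (since
`g = λ a`). But `B`, being elementary, is closed under doubling and halving, so `y ∈ B` and
`g ∈ G_B`.
-/

section Powers

theorem exists_nat_pow_near_of_le_pow {K : Type*} [Semiring K] [LinearOrder K]
    [IsStrictOrderedRing K] {x y : K} (hx : 1 ≤ x) (hy : 1 < y) {m : ℕ} (hxy : x ≤ y ^ m) :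
    ∃ k : ℕ, y ^ k ≤ x ∧ x < y ^ (k + 1) := by
  classical
  have hex : ∃ k : ℕ, x < y ^ (k + 1) := ⟨m, hxy.trans_lt (pow_lt_pow_right₀ hy m.lt_succ_self)⟩
  refine ⟨Nat.find hex, ?_, Nat.find_spec hex⟩
  rcases h : Nat.find hex with _ | k
  · simpa using hx
  · exact not_lt.1 (Nat.find_min hex (h ▸ k.lt_succ_self))

variable {K : Type*} [Field K] [LinearOrder K] [IsStrictOrderedRing K]

theorem exists_mem_Ico_zpow_of_le_pow {x y : K} (hy : 1 < y) {m : ℕ} (hx : 1 ≤ x * y ^ m)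
    (hxy : x ≤ y ^ m) : ∃ j : ℤ, x ∈ Set.Ico (y ^ j) (y ^ (j + 1)) := by
  have hym : 0 < y ^ m := pow_pos (zero_lt_one.trans hy) m
  have hy0 : y ≠ 0 := (zero_lt_one.trans hy).ne'
  obtain ⟨k, hk₁, hk₂⟩ := exists_nat_pow_near_of_le_pow hx hy
    (by rw [pow_add]; exact mul_le_mul_of_nonneg_right hxy hym.le : x * y ^ m ≤ y ^ (m + m))
  refine ⟨k - m, ?_, ?_⟩
  · rw [zpow_sub₀ hy0, zpow_natCast, zpow_natCast, div_le_iff₀ hym]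
    exact hk₁
  · rw [sub_add_eq_add_sub, zpow_sub₀ hy0, zpow_natCast, lt_div_iff₀ hym]
    exact_mod_cast hk₂

theorem exists_mul_two_zpow_mem_Ico {g b : K} (hg : 0 < g) {n : ℕ} (hn : 0 < n)
    (h₁ : 1 / (n : K) ≤ g / b) (h₂ : g / b ≤ n) : ∃ j : ℤ, b * 2 ^ j ∈ Set.Ico g (g + g) := by
  have hnK : (0 : K) < n := by exact_mod_cast hn
  have hgb : 0 < g / b := lt_of_lt_of_le (by positivity) h₁
  have hb : 0 < b := (div_pos_iff_of_pos_left hg).1 hgb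
  have hlo : 1 / (n : K) ≤ b / g := one_div_div g b ▸ one_div_le_one_div_of_le hgb h₂
  have hhi : b / g ≤ n := by
    simpa [one_div_div] using one_div_le_one_div_of_le (by positivity) h₁
  have hn2 : (n : K) ≤ 2 ^ n := by exact_mod_cast Nat.lt_two_pow_self.le
  have hbig : (1 : K) ≤ b / g * 2 ^ n :=
    calc (1 : K) ≤ 1 / n * 2 ^ n := by rw [one_div, inv_mul_eq_div, one_le_div hnK]; exact hn2
      _ ≤ b / g * 2 ^ n := by gcongr
  obtain ⟨j, hj₁, hj₂⟩ := exists_mem_Ico_zpow_of_le_pow one_lt_two hbig (hhi.trans hn2)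
  refine ⟨-j, ?_, ?_⟩
  · rw [zpow_neg, ← div_eq_mul_inv, le_div_iff₀ (zpow_pos two_pos j), mul_comm]
    rwa [le_div_iff₀ hg] at hj₁
  · rw [zpow_neg, ← div_eq_mul_inv, div_lt_iff₀ (zpow_pos two_pos j)]
    rw [div_lt_iff₀ hg, zpow_add_one₀ two_ne_zero] at hj₂
    linarith

end Powers

section ElementarySubstructure

variable {L : FirstOrder.Language} {M : Type*} [L.Structure M]

theorem exists_mem_realize_of_exists (S : L.ElementarySubstructure M) {α : Type*}
    (φ : L.BoundedFormula α 1) {v : α → M} (hv : ∀ a, v a ∈ S) (h : ∃ y : M, φ.Realize v ![y]) :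
    ∃ y ∈ S, φ.Realize v ![y] := by
  have hsnoc : ∀ {N : Type _} (q : Fin 0 → N) (y : N), Fin.snoc q y = ![y] := fun q y => by
    rw [Subsingleton.elim q ![], Matrix.Fin.snoc_vecEmpty]
  let w : α → S := fun a => ⟨v a, hv a⟩
  have hex : φ.ex.Realize (S.subtype ∘ w) (S.subtype ∘ ![]) := by
    obtain ⟨y, hy⟩ := h
    exact BoundedFormula.realize_ex.2 ⟨y, by rw [hsnoc]; exact hy⟩
  obtain ⟨z, hz⟩ := BoundedFormula.realize_ex.1 ((S.subtype.map_boundedFormula _ _ _).1 hex)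
  rw [hsnoc, ← S.subtype.map_boundedFormula] at hz
  have hz' : S.subtype ∘ ![z] = ![(z : M)] := by funext i; fin_cases i; rfl
  exact ⟨z, z.2, hz' ▸ hz⟩

theorem mul_two_zpow_mem {K : Type*} [Field K] [CharZero K] [L.Structure K]
    {add : L.Term (Fin 2)} (hadd : ∀ x y : K, add.realize ![x, y] = x + y)
    (S : L.ElementarySubstructure K) {b : K} (hb : b ∈ S) (j : ℤ) : b * 2 ^ j ∈ S := by
  have hdouble : ∀ x ∈ S, x + x ∈ S := fun x hx => by
    rw [← hadd]
    exact Term.realize_mem (S := S.toSubstructure) add ![x, x] (fun i => by fin_cases i <;> exact hx)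
  have hhalf : ∀ x ∈ S, x / 2 ∈ S := fun x hx => by
    let φ : L.BoundedFormula (Fin 1) 1 := (add.subst ![&0, &0]) =' Term.var (Sum.inl 0)
    have hφ : ∀ y, φ.Realize ![x] ![y] ↔ y + y = x := fun y => by
      rw [← hadd]
      simp only [φ, BoundedFormula.realize_bdEqual, Term.realize_subst]
      congr! 2
      funext i; fin_cases i <;> rfl
    obtain ⟨y, hyS, hy⟩ := exists_mem_realize_of_exists S φ (v := ![x])
      (fun i => by fin_cases i; exact hx) ⟨x / 2, (hφ _).2 (add_halves x)⟩
    rwa [← (hφ y).1 hy, add_self_div_two]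
  induction j using Int.induction_on with
  | zero => simpa using hb
  | succ k ih =>
    rw [zpow_add_one₀ two_ne_zero, ← mul_assoc, mul_two]
    exact hdouble _ ih
  | pred k ih =>
    rw [zpow_sub_one₀ two_ne_zero, ← mul_assoc, ← div_eq_mul_inv]
    exact hhalf _ ih

end ElementarySubstructure

section LamSentences

variable {L : FirstOrder.Language.{0, 0}} (add : L.Term (Fin 2))

def lamFunc : (LF L).Functions 1 := Sum.inr PUnit.unit

def addTerm {β : Type*} (t s : (LF L).Term β) : (LF L).Term β :=
  (LHom.sumInl.onTerm add).subst ![t, s]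

variable {M : Type*} [L.Structure M] (F : M → M)

theorem realize_lamFunc_apply₁ {β : Type*} (t : (LF L).Term β) (v : β → M) :
    letI := LFStructure L M F
    (lamFunc.apply₁ t).realize v = F (t.realize v) := rfl

theorem realize_sumInl_onTerm {β : Type*} (t : L.Term β) (v : β → M) :
    letI := LFStructure L M F
    Term.realize (L := LF L) v (LHom.sumInl.onTerm t) = t.realize v := by
  let := unaryFunStructure M F
  exact LHom.realize_onTerm (L' := L.sum unaryFunLang) LHom.sumInl t v

theorem realize_addTerm [Add M]
    (hadd : ∀ x y : M, add.realize ![x, y] = x + y) {β : Type*} (t s : (LF L).Term β)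
    (v : β → M) :
    letI := LFStructure L M F
    (addTerm add t s).realize v = t.realize v + s.realize v := by
  let := LFStructure L M F
  refine Term.realize_subst.trans ((realize_sumInl_onTerm F add _).trans ?_)
  rw [← hadd]
  congr 1
  funext i; fin_cases i <;> rfl

variable [L.IsOrdered]

def leFormula {β : Type*} {n : ℕ} (t s : (LF L).Term (β ⊕ Fin n)) : (LF L).BoundedFormula β n :=
  Relations.boundedFormula₂ (Sum.inl leSymb : (LF L).Relations 2) t s

/-- Says `0 ≤ λ x` for all `x`, in the form `λ x ≤ λ x + λ x` so that no term for `0` is needed. -/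
def lamNonnegSentence : (LF L).Sentence :=
  ∀' leFormula (lamFunc.apply₁ &0) (addTerm add (lamFunc.apply₁ &0) (lamFunc.apply₁ &0))

def lamEqSentence : (LF L).Sentence :=
  ∀' ∀' (leFormula (lamFunc.apply₁ &0) &1 ⟹
    ∼(leFormula (addTerm add (lamFunc.apply₁ &0) (lamFunc.apply₁ &0)) &1) ⟹
      (lamFunc.apply₁ &1 =' lamFunc.apply₁ &0))

theorem realize_leFormula [LE M] (hle : OrdCompat L M) {β : Type*} {n : ℕ}
    (t s : (LF L).Term (β ⊕ Fin n)) (v : β → M) (xs : Fin n → M) :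
    letI := LFStructure L M F
    (leFormula t s).Realize v xs ↔ t.realize (Sum.elim v xs) ≤ s.realize (Sum.elim v xs) := by
  let := LFStructure L M F
  exact BoundedFormula.realize_rel₂.trans (hle _ _)

theorem realize_lamNonnegSentence [AddCommGroup M] [LinearOrder M] [IsOrderedAddMonoid M]
    (hle : OrdCompat L M) (hadd : ∀ x y : M, add.realize ![x, y] = x + y) :
    letI := LFStructure L M F
    M ⊨ lamNonnegSentence add ↔ ∀ x, 0 ≤ F x := by
  let := LFStructure L M F
  simp only [Sentence.Realize, Formula.Realize, lamNonnegSentence, BoundedFormula.realize_all,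
    realize_leFormula F hle, realize_addTerm _ F hadd, realize_lamFunc_apply₁]
  simp [Fin.snoc]

theorem realize_lamEqSentence [Add M] [LinearOrder M]
    (hle : OrdCompat L M) (hadd : ∀ x y : M, add.realize ![x, y] = x + y) :
    letI := LFStructure L M F
    M ⊨ lamEqSentence add ↔ ∀ x y, F x ≤ y → y < F x + F x → F y = F x := by
  let := LFStructure L M F
  simp only [Sentence.Realize, Formula.Realize, lamEqSentence, BoundedFormula.realize_all,
    BoundedFormula.realize_imp, BoundedFormula.realize_not, BoundedFormula.realize_bdEqual,
    realize_leFormula F hle, realize_addTerm _ F hadd, realize_lamFunc_apply₁]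
  simp [Fin.snoc]

end LamSentences

theorem eq_log_of_zpow_le_of_lt_two_mul {x : ℝ} {k : ℤ} (h₁ : (2 : ℝ) ^ k ≤ x)
    (h₂ : x < 2 * 2 ^ k) : k = Int.log 2 x := by
  have hx : 0 < x := (zpow_pos two_pos k).trans_le h₁
  rw [← zpow_one_add₀ two_ne_zero, add_comm] at h₂
  have := (Int.zpow_le_iff_le_log one_lt_two hx).1 (by exact_mod_cast h₁)
  have := (Int.lt_zpow_iff_log_lt one_lt_two hx).1 (by exact_mod_cast h₂)
  omega

theorem lam_eq_zpow {x : ℝ} {k : ℤ} (h₁ : (2 : ℝ) ^ k ≤ x) (h₂ : x < 2 * 2 ^ k) :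
    lam x = 2 ^ k := by
  have h : ∃ k : ℤ, (2 : ℝ) ^ k ≤ x ∧ x < 2 * 2 ^ k := ⟨k, h₁, h₂⟩
  rw [lam, dif_pos h, eq_log_of_zpow_le_of_lt_two_mul h.choose_spec.1 h.choose_spec.2,
    ← eq_log_of_zpow_le_of_lt_two_mul h₁ h₂]

theorem lam_nonneg (x : ℝ) : 0 ≤ lam x := by
  unfold lam
  split_ifs <;> positivity

theorem lam_eq_of_le_of_lt {x y : ℝ} (h₁ : lam x ≤ y) (h₂ : y < lam x + lam x) :
    lam y = lam x := by
  by_cases h : ∃ k : ℤ, (2 : ℝ) ^ k ≤ x ∧ x < 2 * 2 ^ k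
  · obtain ⟨k, hk₁, hk₂⟩ := h
    rw [lam_eq_zpow hk₁ hk₂] at h₁ h₂ ⊢
    exact lam_eq_zpow h₁ (by linarith)
  · rw [lam, dif_neg h] at h₁ h₂
    linarith

theorem statement_15_general (L : FirstOrder.Language.{0, 0}) [L.IsOrdered] [L.Structure ℝ]
    (hcR : OrdCompat L ℝ) (ops : RingOps L) (hopsR : ops.Compat ℝ) :
    letI : (LF L).Structure ℝ := LFStructure L ℝ lam
    ∀ (A : Type) [L.Structure A] [Field A] [LinearOrder A] [IsStrictOrderedRing A] (lamA : A → A),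
      OrdCompat L A → ops.Compat A →
      (letI : (LF L).Structure A := LFStructure L A lamA
       (((LF L).completeTheory ℝ).Model A) →
       ∀ (B : (LF L).ElementarySubstructure A) (g : A),
         g ∈ Set.range lamA → g ≠ 0 →
         g ∉ {x : A | x ∈ lamA '' (B : Set A) ∧ x ≠ 0} →
         ¬ ∃ b : A, b ∈ (B : Set A) ∧ b ≠ 0 ∧
           ∃ n : ℕ, 0 < n ∧ 1 / (n : A) ≤ g / b ∧ g / b ≤ (n : A)) := by
  let : (LF L).Structure ℝ := LFStructure L ℝ lam
  intro A _ _ _ _ lamA hcA hopsA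
  let : (LF L).Structure A := LFStructure L A lamA
  intro hA B g ⟨a, hag⟩ hg hgB ⟨b, hbB, _, n, hn, hlo, hhi⟩
  have transfer : ∀ φ : (LF L).Sentence, ℝ ⊨ φ → A ⊨ φ := fun φ hφ =>
    Theory.realize_sentence_of_mem _ (mem_completeTheory.2 hφ)
  have hnonneg := (realize_lamNonnegSentence _ lamA hcA hopsA.1).1
    (transfer _ ((realize_lamNonnegSentence _ lam hcR hopsR.1).2 lam_nonneg))
  have hlamEq := (realize_lamEqSentence _ lamA hcA hopsA.1).1
    (transfer _ ((realize_lamEqSentence _ lam hcR hopsR.1).2 fun _ _ => lam_eq_of_le_of_lt))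
  subst hag
  obtain ⟨j, hj₁, hj₂⟩ := exists_mul_two_zpow_mem_Ico ((hnonneg a).lt_of_ne' hg) hn hlo hhi
  have hadd : ∀ x y : A, Term.realize (L := LF L) ![x, y] (LHom.sumInl.onTerm ops.add) = x + y :=
    fun x y => (realize_sumInl_onTerm lamA ops.add _).trans (hopsA.1 x y)
  exact hgB ⟨⟨b * 2 ^ j, mul_two_zpow_mem hadd B hbB j, hlamEq a _ hj₁ hj₂⟩, hg⟩

/-- the Claim in the proof of Corollary 6.5 of "Dependent Pairs": with
`T_disc` as before and `(B, λ) ⪯ (A, λ)` models of `T_disc`, if `g ∈ G_A := λ(A) ∖ {0}` and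
`g ∉ G_B := λ(B) ∖ {0}`, then there are no nonzero `b ∈ B` and `n ≥ 1` with
`1/n ≤ g/b ≤ n`. -/
theorem statement_15 (L : FirstOrder.Language.{0, 0}) [L.IsOrdered] [L.Structure ℝ]
    (hcR : OrdCompat L ℝ) (ops : RingOps L) (hopsR : ops.Compat ℝ)
    (hominR : OMinimalStructure L ℝ) (hpb : PolyBounded L) (hexp : FieldOfExpQ L)
    (hQE : HasQE (L.completeTheory ℝ)) (hUniv : HasUnivAx (L.completeTheory ℝ)) :
    letI : (LF L).Structure ℝ := LFStructure L ℝ lam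
    ∀ (A : Type) [L.Structure A] [Field A] [LinearOrder A] [IsStrictOrderedRing A] (lamA : A → A),
      OrdCompat L A → ops.Compat A →
      (letI : (LF L).Structure A := LFStructure L A lamA
       (((LF L).completeTheory ℝ).Model A) →
       ∀ (B : (LF L).ElementarySubstructure A) (g : A),
         g ∈ Set.range lamA → g ≠ 0 →
         g ∉ {x : A | x ∈ lamA '' (B : Set A) ∧ x ≠ 0} →
         ¬ ∃ b : A, b ∈ (B : Set A) ∧ b ≠ 0 ∧
           ∃ n : ℕ, 0 < n ∧ 1 / (n : A) ≤ g / b ∧ g / b ≤ (n : A)) :=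
  statement_15_general L hcR ops hopsR

end PaperDep
end
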